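/- (Gauss-Kuzmin-type equation) Let μ be a non-atomic probability measure on the Borel subsets of [0,θ], and for n ≥ 0 define F_n(x) = μ({y ∈ [0,θ] : T_θⁿ(y) ≤ x}). Then for every x ∈ [0,θ] and every n ≥ 0, F_{n+1}(x) = Σ_{i≥m} ( F_n(1/(iθ)) − F_n(1/(iθ + x)) ). -/

import Mathlib

open MeasureTheory Real Set

/-- θ = 1/√m. -/
noncomputable def theta (m : ℕ) : ℝ := 1 / Real.sqrt m

/-- The θ-expansion transformation T_θ(x) = 1/x − θ·⌊1/(xθ)⌋ for x ≠ 0, T_θ(0) = 0. -/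
noncomputable def Tmap (m : ℕ) (x : ℝ) : ℝ :=
  if x = 0 then 0 else 1 / x - theta m * (⌊1 / (x * theta m)⌋ : ℝ)

/-- `digit m x n` is the digit a_{n+1}(x) = ⌊1/(θ·T_θⁿ(x))⌋. -/
noncomputable def digit (m : ℕ) (x : ℝ) (n : ℕ) : ℤ :=
  ⌊1 / (theta m * (Tmap m)^[n] x)⌋

/-!
If `z ∈ (0, θ]` has first digit `k` (so `k ≥ m`), then `T_θ z = 1/z − kθ`, so `T_θ z ≤ x` says
`1/z ∈ [kθ, kθ + x]`, i.e. `z ∈ [1/(kθ + x), 1/(kθ)]`. Since `x ≤ θ`, the half-open intervals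
`(1/(kθ + x), 1/(kθ)]`, `k ≥ m`, are disjoint, and `{T_θ ≤ x}` differs from their union by a
countable set. The fibres of `T_θ` are countable, so the `T_θⁿ`-preimage of that countable set is
`μ`-null, and `F_{n+1}(x)` is the sum of the `μ`-measures of `{T_θⁿ ∈ (1/(kθ + x), 1/(kθ)]}`,
which are `F_n(1/(kθ)) − F_n(1/(kθ + x))`.
-/

variable {m k : ℕ} {x z : ℝ}

lemma theta_pos (hm : 0 < m) : 0 < theta m := by
  unfold theta
  have : (0 : ℝ) < m := by exact_mod_cast hm
  positivity

lemma theta_mul_theta (hm : 0 < m) : theta m * theta m = 1 / m := by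
  have : (0 : ℝ) ≤ m := by positivity
  rw [theta, div_mul_div_comm, one_mul, Real.mul_self_sqrt this]

-- This holds at `z = 0` too, because `1 / (0 * theta m) = 0`.
lemma Tmap_eq_theta_mul_fract (hm : 0 < m) (z : ℝ) :
    Tmap m z = theta m * Int.fract (1 / (z * theta m)) := by
  have hθ := (theta_pos hm).ne'
  rcases eq_or_ne z 0 with rfl | hz
  · simp [Tmap]
  · rw [Tmap, if_neg hz, ← Int.self_sub_floor]
    field_simp

lemma mapsTo_Tmap (hm : 0 < m) :
    MapsTo (Tmap m) (Icc 0 (theta m)) (Icc 0 (theta m)) := by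
  intro z _
  rw [Tmap_eq_theta_mul_fract hm]
  have hθ := theta_pos hm
  exact ⟨by positivity [Int.fract_nonneg (1 / (z * theta m))],
    mul_le_of_le_one_right hθ.le (Int.fract_lt_one _).le⟩

lemma measurable_Tmap (hm : 0 < m) : Measurable (Tmap m) := by
  simp_rw [funext (Tmap_eq_theta_mul_fract hm)]
  fun_prop

lemma countable_Tmap_preimage_singleton (m : ℕ) (c : ℝ) : (Tmap m ⁻¹' {c}).Countable := by
  refine ((countable_range fun j : ℤ => (c + theta m * j)⁻¹).insert 0).mono fun z hz => ?_
  rcases eq_or_ne z 0 with rfl | hz0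
  · exact mem_insert 0 _
  · refine Or.inr ⟨⌊1 / (z * theta m)⌋, ?_⟩
    rw [mem_preimage, Tmap, if_neg hz0, mem_singleton_iff] at hz
    dsimp only
    rw [← hz, sub_add_cancel, one_div, inv_inv]

lemma Set.Countable.preimage_iterate {α : Type*} {f : α → α}
    (hf : ∀ c, (f ⁻¹' {c}).Countable) {C : Set α} (hC : C.Countable) (n : ℕ) :
    (f^[n] ⁻¹' C).Countable := by
  induction n with
  | zero => exact hC
  | succ n ih =>
    rw [Function.iterate_succ, preimage_comp, ← biUnion_preimage_singleton]
    exact ih.biUnion fun c _ => hf c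

open Function in
lemma measureReal_inter_preimage_iUnion_Ioc {α ι : Type*} [MeasurableSpace α] [Countable ι]
    (μ : Measure α) [IsFiniteMeasure μ] {f : α → ℝ} (hf : Measurable f) {S : Set α}
    (hS : MeasurableSet S) {a b : ι → ℝ} (hab : ∀ i, a i ≤ b i)
    (hd : Pairwise (Disjoint on fun i => Ioc (a i) (b i))) :
    μ.real (S ∩ f ⁻¹' ⋃ i, Ioc (a i) (b i)) =
      ∑' i, (μ.real {y ∈ S | f y ≤ b i} - μ.real {y ∈ S | f y ≤ a i}) := by
  have hslice : ∀ i, S ∩ f ⁻¹' Ioc (a i) (b i) = {y ∈ S | f y ≤ b i} \ {y ∈ S | f y ≤ a i} := by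
    intro i
    ext y
    simp only [mem_inter_iff, mem_preimage, mem_Ioc, mem_sdiff, mem_ofPred_eq, not_and, not_le]
    tauto
  have hle : ∀ i, {y ∈ S | f y ≤ a i} ⊆ {y ∈ S | f y ≤ b i} :=
    fun i y hy => ⟨hy.1, hy.2.trans (hab i)⟩
  rw [preimage_iUnion, inter_iUnion, measureReal_def,
    measure_iUnion (fun i j hij => ((hd hij).preimage f).mono inter_subset_right inter_subset_right)
      (fun i => hS.inter (hf measurableSet_Ioc)),
    ENNReal.tsum_toReal_eq fun i => measure_ne_top μ _]
  refine tsum_congr fun i => ?_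
  rw [← measureReal_def, hslice, measureReal_sdiff (hle i) (hS.inter (hf measurableSet_Iic))]

/-- For `0 ≤ x ≤ theta m` and `k ≥ m`: up to its left endpoint, the set of `z` with first digit `k`
and `Tmap m z ≤ x`. -/
def thetaCylinder (m : ℕ) (x : ℝ) (k : ℕ) : Set ℝ :=
  Ioc (1 / (k * theta m + x)) (1 / (k * theta m))

lemma Tmap_le_of_mem_thetaCylinder (hm : 0 < m) (hk : 0 < k) (hx : 0 ≤ x)
    (hz : z ∈ thetaCylinder m x k) : Tmap m z ≤ x := by
  have hθ := theta_pos hm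
  have hkθ : 0 < k * theta m := by positivity
  have hz0 : 0 < z := (one_div_pos.2 (by positivity)).trans hz.1
  have hk_le : (k : ℝ) ≤ 1 / (z * theta m) := by
    rw [le_div_iff₀ (by positivity)]
    nlinarith [(le_div_iff₀ hkθ).1 hz.2]
  have hfract : Int.fract (1 / (z * theta m)) ≤ 1 / (z * theta m) - k := by
    rw [← Int.self_sub_floor]
    have : (k : ℤ) ≤ ⌊1 / (z * theta m)⌋ := Int.le_floor.2 (by exact_mod_cast hk_le)
    gcongr
    exact_mod_cast this
  have hinv : 1 / z < k * theta m + x := (one_div_lt (by positivity) hz0).1 hz.1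
  calc Tmap m z = theta m * Int.fract (1 / (z * theta m)) := Tmap_eq_theta_mul_fract hm z
    _ ≤ theta m * (1 / (z * theta m) - k) := by gcongr
    _ = 1 / z - k * theta m := by field_simp
    _ ≤ x := by linarith

lemma exists_mem_thetaCylinder_of_Tmap_le (hm : 0 < m) (hz : z ∈ Ioc 0 (theta m))
    (hT : Tmap m z ≤ x) (hne : ∀ k : ℕ, z ≠ 1 / (k * theta m + x)) :
    ∃ k, m ≤ k ∧ z ∈ thetaCylinder m x k := by
  obtain ⟨hz0, hzθ⟩ := hz
  have hθ := theta_pos hm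
  set u := 1 / (z * theta m) with hu
  have hu0 : 0 ≤ u := by positivity
  have hθu : theta m * u = 1 / z := by rw [hu]; field_simp
  have hkm : m ≤ ⌊u⌋₊ := by
    refine Nat.le_floor ?_
    rw [hu, le_div_iff₀ (by positivity)]
    have : z * theta m ≤ 1 / m := theta_mul_theta hm ▸ by gcongr
    have hm' : (0 : ℝ) < m := by exact_mod_cast hm
    calc (m : ℝ) * (z * theta m) ≤ m * (1 / m) := by gcongr
      _ = 1 := by field_simp
  refine ⟨⌊u⌋₊, hkm, ?_⟩
  have hk : (0 : ℝ) < ⌊u⌋₊ * theta m := by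
    have : (1 : ℝ) ≤ ⌊u⌋₊ := by exact_mod_cast hkm.trans' hm
    positivity
  have hfract : Int.fract u = u - ⌊u⌋₊ := by
    rw [← Int.self_sub_floor, natCast_floor_eq_intCast_floor hu0]
  have hTz : 1 / z - ⌊u⌋₊ * theta m ≤ x := by
    rw [Tmap_eq_theta_mul_fract hm, ← hu, hfract] at hT
    linarith
  refine ⟨lt_of_le_of_ne ?_ fun h => hne _ h.symm, ?_⟩
  · rw [one_div_le (by linarith [one_div_pos.2 hz0]) hz0]
    linarith
  · rw [le_one_div hz0 hk]
    nlinarith [Nat.floor_le hu0]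

lemma thetaCylinder_disjoint {l : ℕ} (hm : 0 < m) (hk : 0 < k) (hx0 : 0 ≤ x) (hxθ : x ≤ theta m)
    (hkl : k < l) : Disjoint (thetaCylinder m x k) (thetaCylinder m x l) := by
  have hθ := theta_pos hm
  refine (Ioc_disjoint_Ioc_of_le (one_div_le_one_div_of_le (by positivity) ?_)).symm
  have : (k : ℝ) + 1 ≤ l := by exact_mod_cast hkl
  nlinarith

open Function in
lemma pairwise_disjoint_thetaCylinder (hm : 0 < m) (hx0 : 0 ≤ x) (hxθ : x ≤ theta m) :
    Pairwise (Disjoint on fun i : ℕ => thetaCylinder m x (i + m)) :=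
  (pairwise_disjoint_on _).2 fun _ _ hij => thetaCylinder_disjoint hm (by omega) hx0 hxθ (by omega)

lemma Tmap_le_iff_mem_iUnion_thetaCylinder (hm : 0 < m) (hx : 0 ≤ x) (hz : z ∈ Ioc 0 (theta m))
    (hne : ∀ k : ℕ, z ≠ 1 / (k * theta m + x)) :
    Tmap m z ≤ x ↔ z ∈ ⋃ i : ℕ, thetaCylinder m x (i + m) := by
  rw [mem_iUnion]
  constructor
  · intro hT
    obtain ⟨k, hmk, hzk⟩ := exists_mem_thetaCylinder_of_Tmap_le hm hz hT hne
    exact ⟨k - m, by rwa [Nat.sub_add_cancel hmk]⟩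
  · rintro ⟨i, hi⟩
    exact Tmap_le_of_mem_thetaCylinder hm (by omega) hx hi

lemma setOf_Tmap_iterate_succ_le_ae_eq (hm : 0 < m) (hx : 0 ≤ x) (μ : Measure ℝ)
    [NullSingletonClass μ] (n : ℕ) :
    {y ∈ Icc 0 (theta m) | (Tmap m)^[n + 1] y ≤ x} =ᵐ[μ]
      (Icc 0 (theta m) ∩ (Tmap m)^[n] ⁻¹' ⋃ i : ℕ, thetaCylinder m x (i + m) : Set ℝ) := by
  have hnull : μ ((Tmap m)^[n] ⁻¹' insert 0 (range fun k : ℕ => 1 / (k * theta m + x))) = 0 :=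
    (((countable_range _).insert 0).preimage_iterate (countable_Tmap_preimage_singleton m) n
      ).measure_zero μ
  refine Filter.eventuallyEq_set.2 ((measure_eq_zero_iff_ae_notMem.1 hnull).mono fun y hy => ?_)
  simp only [mem_preimage, mem_insert_iff, mem_range, not_or, not_exists] at hy
  simp only [mem_ofPred_eq, mem_inter_iff, mem_preimage, Function.iterate_succ_apply']
  refine and_congr_right fun hy_mem => ?_
  have hz := (mapsTo_Tmap hm).iterate n hy_mem
  exact Tmap_le_iff_mem_iUnion_thetaCylinder hm hx ⟨hz.1.lt_of_ne' hy.1, hz.2⟩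
    fun k h => hy.2 k h.symm

theorem gauss_kuzmin_equation_general (m : ℕ) (hm : 2 ≤ m)
    (μ : Measure ℝ) (hprob : IsProbabilityMeasure μ) (hna : NoAtoms μ)
    (F : ℕ → ℝ → ℝ)
    (hF : ∀ n : ℕ, ∀ x : ℝ,
      F n x = (μ {y ∈ Icc 0 (theta m) | (Tmap m)^[n] y ≤ x}).toReal) :
    ∀ x ∈ Icc 0 (theta m), ∀ n : ℕ,
      F (n + 1) x =
        ∑' i : ℕ,
          (F n (1 / (((i + m : ℕ) : ℝ) * theta m)) -
            F n (1 / (((i + m : ℕ) : ℝ) * theta m + x))) := by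
  rintro x ⟨hx0, hxθ⟩ n
  have hm0 : 0 < m := by omega
  have := hprob
  have : NullSingletonClass μ := hna
  rw [hF, ← measureReal_def, measureReal_congr (setOf_Tmap_iterate_succ_le_ae_eq hm0 hx0 μ n)]
  refine (measureReal_inter_preimage_iUnion_Ioc μ ((measurable_Tmap hm0).iterate n)
    measurableSet_Icc (fun i => ?_) (pairwise_disjoint_thetaCylinder hm0 hx0 hxθ)).trans ?_
  · exact one_div_le_one_div_of_le (by positivity [theta_pos hm0]) (le_add_of_nonneg_right hx0)
  · simp only [hF, measureReal_def]

/-- Gauss-Kuzmin-type equation: for a non-atomic probability measure μ on [0,θ],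
with F_n(x) = μ(T_θⁿ ≤ x), one has
F_{n+1}(x) = Σ_{i≥m} ( F_n(1/(iθ)) − F_n(1/(iθ+x)) ). -/
theorem gauss_kuzmin_equation (m : ℕ) (hm : 2 ≤ m) (hns : ¬ IsSquare m)
    (μ : Measure ℝ) (hprob : IsProbabilityMeasure μ) (hna : NoAtoms μ)
    (hsupp : μ (Icc 0 (theta m))ᶜ = 0)
    (F : ℕ → ℝ → ℝ)
    (hF : ∀ n : ℕ, ∀ x : ℝ,
      F n x = (μ {y ∈ Icc 0 (theta m) | (Tmap m)^[n] y ≤ x}).toReal) :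
    ∀ x ∈ Icc 0 (theta m), ∀ n : ℕ,
      F (n + 1) x =
        ∑' i : ℕ,
          (F n (1 / (((i + m : ℕ) : ℝ) * theta m)) -
            F n (1 / (((i + m : ℕ) : ℝ) * theta m + x))) :=
  gauss_kuzmin_equation_general m hm μ hprob hna F hF
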